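/- arXiv:2512.17737 — 2 statements merged into one kernel-verified Lean document; each statement's English description precedes it below -/
import Mathlib

section
/- Fix a time t with 0 ≤ t ≤ T. The maximum of the objective G over all paths x : {0,…,T} → X equals the maximum, over all partial paths (x_t,…,x_T) ∈ X^{T−t+1}, of W_t(x_t) + Σ_{s=t+1}^{T} γ_s(x_s, x_{s−1}), where W_t is the forward value function. (Paper's Lemma 2, backward mode decomposition.) -/
open Finset

/-- The objective `G` of the modal path problem; here `γ s` plays the role of the
paper's `γ_{s+1}` (transition score from time `s` to time `s+1`). -/
noncomputable def pathObj {X : Type*} {T : ℕ} (γ0 : X → ℝ) (γ : Fin T → X → X → ℝ)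
    (x : Fin (T + 1) → X) : ℝ :=
  γ0 (x 0) + ∑ s : Fin T, γ s (x s.succ) (x s.castSucc)

/-- The backward value function `V_t(x)`: the maximum of `∑_{s=t+1}^{T} γ_s(x_s, x_{s-1})`
over all choices of `x_{t+1}, …, x_T`, with `x_t = x` (the summand only depends on the
path from time `t` onwards). In particular `V_T = 0`. -/
noncomputable def backVal {X : Type*} [Fintype X] [Nonempty X] {T : ℕ}
    (γ : Fin T → X → X → ℝ) (t : Fin (T + 1)) (x : X) : ℝ :=
  ⨆ z : { z : Fin (T + 1) → X // z t = x },
    ∑ s ∈ Finset.univ.filter (fun s : Fin T => (t : ℕ) ≤ (s : ℕ)),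
      γ s (z.1 s.succ) (z.1 s.castSucc)

/-- The forward value function `W_t(x)`: the maximum of
`γ_0(x_0) + ∑_{s=1}^{t} γ_s(x_s, x_{s-1})` over all choices of `x_0, …, x_{t-1}`,
with `x_t = x` (the expression only depends on the path up to time `t`).
In particular `W_0 = γ_0`. -/
noncomputable def fwdVal {X : Type*} [Fintype X] [Nonempty X] {T : ℕ}
    (γ0 : X → ℝ) (γ : Fin T → X → X → ℝ) (t : Fin (T + 1)) (x : X) : ℝ :=
  ⨆ z : { z : Fin (T + 1) → X // z t = x },
    (γ0 (z.1 0) +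
      ∑ s ∈ Finset.univ.filter (fun s : Fin T => (s : ℕ) < (t : ℕ)),
        γ s (z.1 s.succ) (z.1 s.castSucc))

/-! A path is split at time `t` into a prefix, scored up to time `t`, and a suffix, scored from
time `t` on. The two parts share only the state at time `t`, so any prefix ending at `x t` can be
spliced onto the suffix of `x`; hence maximizing the prefix for fixed `x t` (which is `W_t`) and
then the rest gives the maximum of `G`. -/

section BackwardModeDecomposition

variable {X : Type*} {T : ℕ}

noncomputable def prefixObj (γ0 : X → ℝ) (γ : Fin T → X → X → ℝ) (t : Fin (T + 1))
    (x : Fin (T + 1) → X) : ℝ :=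
  γ0 (x 0) + ∑ s ∈ univ.filter (fun s : Fin T => (s : ℕ) < (t : ℕ)), γ s (x s.succ) (x s.castSucc)

noncomputable def suffixObj (γ : Fin T → X → X → ℝ) (t : Fin (T + 1))
    (x : Fin (T + 1) → X) : ℝ :=
  ∑ s ∈ univ.filter (fun s : Fin T => (t : ℕ) ≤ (s : ℕ)), γ s (x s.succ) (x s.castSucc)

theorem pathObj_eq_prefixObj_add_suffixObj (γ0 : X → ℝ) (γ : Fin T → X → X → ℝ)
    (t : Fin (T + 1)) (x : Fin (T + 1) → X) :
    pathObj γ0 γ x = prefixObj γ0 γ t x + suffixObj γ t x := by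
  rw [pathObj, prefixObj, suffixObj, add_assoc,
    ← sum_filter_add_sum_filter_not univ (fun s : Fin T => (s : ℕ) < (t : ℕ))]
  simp only [not_lt]

theorem prefixObj_congr (γ0 : X → ℝ) (γ : Fin T → X → X → ℝ) {t : Fin (T + 1)}
    {x y : Fin (T + 1) → X} (h : ∀ s ≤ t, x s = y s) :
    prefixObj γ0 γ t x = prefixObj γ0 γ t y := by
  unfold prefixObj
  refine congrArg₂ _ (congrArg γ0 (h 0 (Fin.zero_le t))) (sum_congr rfl fun s hs => ?_)
  have hst : s.castSucc < t := by simpa [Fin.lt_def] using (mem_filter.1 hs).2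
  rw [h _ (Fin.castSucc_lt_iff_succ_le.1 hst), h _ hst.le]

theorem suffixObj_congr (γ : Fin T → X → X → ℝ) {t : Fin (T + 1)}
    {x y : Fin (T + 1) → X} (h : ∀ s, t ≤ s → x s = y s) :
    suffixObj γ t x = suffixObj γ t y := by
  refine sum_congr rfl fun s hs => ?_
  have hts : t ≤ s.castSucc := by simpa [Fin.le_def] using (mem_filter.1 hs).2
  rw [h _ (hts.trans (Fin.castSucc_le_succ s)), h _ hts]

theorem exists_pathObj_eq_prefixObj_add_suffixObj (γ0 : X → ℝ) (γ : Fin T → X → X → ℝ)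
    {t : Fin (T + 1)} {w z : Fin (T + 1) → X} (h : w t = z t) :
    ∃ y, pathObj γ0 γ y = prefixObj γ0 γ t w + suffixObj γ t z := by
  refine ⟨fun s => if s ≤ t then w s else z s, ?_⟩
  rw [pathObj_eq_prefixObj_add_suffixObj γ0 γ t]
  congr 1
  · exact prefixObj_congr γ0 γ fun s hs => if_pos hs
  · refine suffixObj_congr γ fun s hs => ?_
    rcases hs.lt_or_eq with hlt | rfl
    · exact if_neg (not_le.2 hlt)
    · exact (if_pos le_rfl).trans h

variable [Fintype X] [Nonempty X]

theorem fwdVal_eq_iSup_prefixObj (γ0 : X → ℝ) (γ : Fin T → X → X → ℝ) (t : Fin (T + 1))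
    (x : X) : fwdVal γ0 γ t x = ⨆ w : { w : Fin (T + 1) → X // w t = x }, prefixObj γ0 γ t w :=
  rfl

theorem prefixObj_le_fwdVal (γ0 : X → ℝ) (γ : Fin T → X → X → ℝ) (t : Fin (T + 1))
    (x : Fin (T + 1) → X) : prefixObj γ0 γ t x ≤ fwdVal γ0 γ t (x t) := by
  rw [fwdVal_eq_iSup_prefixObj]
  exact le_ciSup (Finite.bddAbove_range fun w : { w : Fin (T + 1) → X // w t = x t } =>
    prefixObj γ0 γ t w) ⟨x, rfl⟩

theorem fwdVal_add_suffixObj_le_iSup_pathObj (γ0 : X → ℝ) (γ : Fin T → X → X → ℝ)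
    (t : Fin (T + 1)) (z : Fin (T + 1) → X) :
    fwdVal γ0 γ t (z t) + suffixObj γ t z ≤ ⨆ x, pathObj γ0 γ x := by
  have : Nonempty { w : Fin (T + 1) → X // w t = z t } := ⟨⟨z, rfl⟩⟩
  rw [fwdVal_eq_iSup_prefixObj, ciSup_add (Finite.bddAbove_range _)]
  refine ciSup_le fun w => ?_
  obtain ⟨y, hy⟩ := exists_pathObj_eq_prefixObj_add_suffixObj γ0 γ (t := t) w.2
  exact hy ▸ le_ciSup (Finite.bddAbove_range _) y

end BackwardModeDecomposition

/-- **Lemma 2 (backward mode decomposition).** For any `0 ≤ t ≤ T`, the maximum of `G`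
over all paths equals the maximum over partial paths `(x_t, …, x_T)` of
`W_t(x_t) + ∑_{s=t+1}^{T} γ_s(x_s, x_{s-1})` (the quantity maximized depends only on
the path from time `t` onwards). -/
theorem forward_value_backward_mode_decomposition
    {X : Type*} [Fintype X] [Nonempty X] {T : ℕ}
    (γ0 : X → ℝ) (γ : Fin T → X → X → ℝ) (t : Fin (T + 1)) :
    (⨆ x : Fin (T + 1) → X, pathObj γ0 γ x) =
      ⨆ z : Fin (T + 1) → X,
        (fwdVal γ0 γ t (z t) +
          ∑ s ∈ Finset.univ.filter (fun s : Fin T => (t : ℕ) ≤ (s : ℕ)),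
            γ s (z s.succ) (z s.castSucc)) := by
  refine le_antisymm (ciSup_le fun x => ?_) (ciSup_le fun z => ?_)
  · rw [pathObj_eq_prefixObj_add_suffixObj γ0 γ t]
    exact (add_le_add_left (prefixObj_le_fwdVal γ0 γ t x) _).trans
      (le_ciSup (Finite.bddAbove_range fun z => fwdVal γ0 γ t (z t) + suffixObj γ t z) x)
  · exact fwdVal_add_suffixObj_le_iSup_pathObj γ0 γ t z
end

section
/- Fix a time t with 0 ≤ t ≤ T. If x* is a modal path, i.e., a maximizer of the objective G over all paths, then the state x*_t is a maximizer over X of the function x ↦ W_t(x) + V_t(x), the sum of the forward and backward value functions at time t. (Paper's Corollary 2, the 'two-filter' formula for the state of the modal path at time t.) -/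
open Finset

lemma pathObj_split {X : Type*} {T : ℕ} (γ0 : X → ℝ) (γ : Fin T → X → X → ℝ)
    (t : Fin (T + 1)) (w : Fin (T + 1) → X) :
    pathObj γ0 γ w =
      (γ0 (w 0) +
        ∑ s ∈ Finset.univ.filter (fun s : Fin T => (s : ℕ) < (t : ℕ)),
          γ s (w s.succ) (w s.castSucc)) +
      ∑ s ∈ Finset.univ.filter (fun s : Fin T => (t : ℕ) ≤ (s : ℕ)),
        γ s (w s.succ) (w s.castSucc) := by
  unfold pathObj
  have := Finset.sum_filter_add_sum_filter_not (Finset.univ : Finset (Fin T))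
    (fun s : Fin T => (s : ℕ) < (t : ℕ)) (fun s => γ s (w s.succ) (w s.castSucc))
  rw [add_assoc]
  congr 1
  rw [← this]
  congr 1
  apply Finset.sum_congr _ (fun _ _ => rfl)
  congr 1
  ext s
  simp [not_lt]

/-- **Corollary 2 (two-filter formula).** For any `0 ≤ t ≤ T`, if `x*` is a modal path
(a maximizer of `G` over all paths), then `x*_t` maximizes
`x ↦ W_t(x) + V_t(x)` over `X`. -/
theorem two_filter_formula_modal_state
    {X : Type*} [Fintype X] [Nonempty X] {T : ℕ}
    (γ0 : X → ℝ) (γ : Fin T → X → X → ℝ) (t : Fin (T + 1))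
    (xs : Fin (T + 1) → X)
    (hmax : ∀ z : Fin (T + 1) → X, pathObj γ0 γ z ≤ pathObj γ0 γ xs) :
    ∀ y : X, fwdVal γ0 γ t y + backVal γ t y ≤
      fwdVal γ0 γ t (xs t) + backVal γ t (xs t) := by
  intro y
  have hne : ∀ x : X, Nonempty { z : Fin (T + 1) → X // z t = x } :=
    fun x => ⟨⟨fun _ => x, rfl⟩⟩
  -- Step B : pathObj xs ≤ fwdVal (xs t) + backVal (xs t)
  have hB : pathObj γ0 γ xs ≤ fwdVal γ0 γ t (xs t) + backVal γ t (xs t) := by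
    rw [pathObj_split γ0 γ t xs]
    unfold fwdVal backVal
    refine add_le_add ?_ ?_
    · exact le_ciSup (f := fun z : { z : Fin (T + 1) → X // z t = xs t } =>
        γ0 (z.1 0) + ∑ s ∈ Finset.univ.filter (fun s : Fin T => (s : ℕ) < (t : ℕ)),
          γ s (z.1 s.succ) (z.1 s.castSucc))
        (Set.Finite.bddAbove (Set.finite_range _)) ⟨xs, rfl⟩
    · exact le_ciSup (f := fun z : { z : Fin (T + 1) → X // z t = xs t } =>
        ∑ s ∈ Finset.univ.filter (fun s : Fin T => (t : ℕ) ≤ (s : ℕ)),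
          γ s (z.1 s.succ) (z.1 s.castSucc))
        (Set.Finite.bddAbove (Set.finite_range _)) ⟨xs, rfl⟩
  -- Step A : fwdVal y + backVal y ≤ pathObj xs
  have hA : fwdVal γ0 γ t y + backVal γ t y ≤ pathObj γ0 γ xs := by
    have key : ∀ z1 z2 : Fin (T + 1) → X, z1 t = y → z2 t = y →
        (γ0 (z1 0) +
          ∑ s ∈ Finset.univ.filter (fun s : Fin T => (s : ℕ) < (t : ℕ)),
            γ s (z1 s.succ) (z1 s.castSucc)) +
        ∑ s ∈ Finset.univ.filter (fun s : Fin T => (t : ℕ) ≤ (s : ℕ)),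
          γ s (z2 s.succ) (z2 s.castSucc) ≤ pathObj γ0 γ xs := by
      intro z1 z2 h1 h2
      set w : Fin (T + 1) → X := fun i => if (i : ℕ) ≤ (t : ℕ) then z1 i else z2 i with hw
      have hw0 : w 0 = z1 0 := by simp [hw]
      have hlt : ∀ s : Fin T, (s : ℕ) < (t : ℕ) →
          w s.succ = z1 s.succ ∧ w s.castSucc = z1 s.castSucc := by
        intro s hs
        constructor
        · simp only [hw]
          rw [if_pos]
          simpa [Fin.val_succ] using hs
        · simp only [hw]
          rw [if_pos]
          simpa [Fin.coe_castSucc] using hs.le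
      have hge : ∀ s : Fin T, (t : ℕ) ≤ (s : ℕ) →
          w s.succ = z2 s.succ ∧ w s.castSucc = z2 s.castSucc := by
        intro s hs
        constructor
        · simp only [hw]
          rw [if_neg]
          simp only [Fin.val_succ, not_le]
          omega
        · simp only [hw]
          by_cases h : (s.castSucc : ℕ) ≤ (t : ℕ)
          · have : (s.castSucc : ℕ) = (t : ℕ) := le_antisymm h (by simpa using hs)
            have heq : s.castSucc = t := Fin.ext this
            rw [if_pos h, heq, h1, h2]
          · rw [if_neg h]
      have hsum1 : ∑ s ∈ Finset.univ.filter (fun s : Fin T => (s : ℕ) < (t : ℕ)),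
          γ s (w s.succ) (w s.castSucc)
          = ∑ s ∈ Finset.univ.filter (fun s : Fin T => (s : ℕ) < (t : ℕ)),
            γ s (z1 s.succ) (z1 s.castSucc) := by
        refine Finset.sum_congr rfl fun s hs => ?_
        have hs' := (Finset.mem_filter.mp hs).2
        rw [(hlt s hs').1, (hlt s hs').2]
      have hsum2 : ∑ s ∈ Finset.univ.filter (fun s : Fin T => (t : ℕ) ≤ (s : ℕ)),
          γ s (w s.succ) (w s.castSucc)
          = ∑ s ∈ Finset.univ.filter (fun s : Fin T => (t : ℕ) ≤ (s : ℕ)),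
            γ s (z2 s.succ) (z2 s.castSucc) := by
        refine Finset.sum_congr rfl fun s hs => ?_
        have hs' := (Finset.mem_filter.mp hs).2
        rw [(hge s hs').1, (hge s hs').2]
      calc _ = pathObj γ0 γ w := by
              rw [pathObj_split γ0 γ t w, hw0, hsum1, hsum2]
        _ ≤ pathObj γ0 γ xs := hmax w
    have h1 := hne y
    unfold fwdVal backVal
    rw [← le_sub_iff_add_le]
    refine ciSup_le fun z1 => ?_
    rw [le_sub_iff_add_le, add_comm, ← le_sub_iff_add_le]
    refine ciSup_le fun z2 => ?_
    rw [le_sub_iff_add_le, add_comm]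
    exact key z1.1 z2.1 z1.2 z2.2
  exact le_trans hA hB
end
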